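/- (Proposition 1) Let A be an invertible n×n real matrix with rows a₁,…,aₙ, and let v ∈ ℝⁿ be an eigenvector of AᵀA with eigenvalue σ² (i.e. v is a right singular vector of A with singular value σ). Then for every x ∈ ℝⁿ and every k ∈ ℕ, the expectation over k independent random reflections satisfies E⟨R^k x, v⟩ = (1 − 2σ²/‖A‖_F²)^k · ⟨x, v⟩. -/

import Mathlib

open scoped RealInnerProductSpace
open Finset

/-- The `i`-th row of the matrix `A`, viewed as a vector in Euclidean space. -/
noncomputable def row {n : ℕ} (A : Matrix (Fin n) (Fin n) ℝ) (i : Fin n) :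
    EuclideanSpace ℝ (Fin n) := (WithLp.equiv 2 (Fin n → ℝ)).symm (A i)

/-- View a plain vector as an element of Euclidean space. -/
noncomputable def toE {n : ℕ} (v : Fin n → ℝ) : EuclideanSpace ℝ (Fin n) :=
  (WithLp.equiv 2 (Fin n → ℝ)).symm v

/-- View an element of Euclidean space as a plain vector. -/
noncomputable def ofE {n : ℕ} (v : EuclideanSpace ℝ (Fin n)) : Fin n → ℝ :=
  WithLp.equiv 2 (Fin n → ℝ) v

/-- The squared Frobenius norm `‖A‖_F²` of a matrix. -/
def frobSq {n : ℕ} (A : Matrix (Fin n) (Fin n) ℝ) : ℝ := ∑ i, ∑ j, (A i j) ^ 2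

/-- The ℓ² operator norm of a matrix. -/
noncomputable def opNorm {n : ℕ} (A : Matrix (Fin n) (Fin n) ℝ) : ℝ :=
  ‖Matrix.toEuclideanCLM (𝕜 := ℝ) A‖

/-- The reflection `R_i x = x − 2·(⟨x, a_i⟩/‖a_i‖²)·a_i` through the hyperplane
`{y : ⟨a_i, y⟩ = 0}`, where `a_i` is the `i`-th row of `A`. -/
noncomputable def reflRow {n : ℕ} (A : Matrix (Fin n) (Fin n) ℝ) (i : Fin n)
    (x : EuclideanSpace ℝ (Fin n)) : EuclideanSpace ℝ (Fin n) :=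
  x - (2 * (⟪x, row A i⟫ / ‖row A i‖ ^ 2)) • row A i

/-- `applySeq A k is x = (R_{i_k} ∘ ⋯ ∘ R_{i_1}) x` for the index sequence `is`. -/
noncomputable def applySeq {n : ℕ} (A : Matrix (Fin n) (Fin n) ℝ) :
    (k : ℕ) → (Fin k → Fin n) → EuclideanSpace ℝ (Fin n) → EuclideanSpace ℝ (Fin n)
  | 0, _, x => x
  | k + 1, is, x => reflRow A (is (Fin.last k)) (applySeq A k (fun j => is j.castSucc) x)

lemma innerE {n : ℕ} (x y : EuclideanSpace ℝ (Fin n)) : ⟪x, y⟫ = ∑ j, x j * y j := by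
  simp [PiLp.inner_apply, RCLike.inner_apply, conj_trivial]
  exact Finset.sum_congr rfl fun _ _ => mul_comm _ _

lemma norm_row_sq {n : ℕ} (A : Matrix (Fin n) (Fin n) ℝ) (i : Fin n) :
    ‖row A i‖ ^ 2 = ∑ j, A i j ^ 2 := by
  rw [EuclideanSpace.norm_eq, Real.sq_sqrt (by positivity)]
  simp [row, sq_abs]

lemma row_ne_zero {n : ℕ} {A : Matrix (Fin n) (Fin n) ℝ} (hA : IsUnit A) (i : Fin n) :
    ‖row A i‖ ^ 2 ≠ 0 := by
  obtain ⟨u, rfl⟩ := hA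
  intro h
  have hz : ∀ j, (u : Matrix (Fin n) (Fin n) ℝ) i j = 0 := by
    rw [norm_row_sq] at h
    intro j
    have := (Finset.sum_eq_zero_iff_of_nonneg (fun j _ => sq_nonneg _)).mp h j (mem_univ j)
    exact pow_eq_zero_iff (n := 2) (by norm_num) |>.mp this
  have h1 : ((u : Matrix (Fin n) (Fin n) ℝ) * (↑u⁻¹ : Matrix (Fin n) (Fin n) ℝ)) i i = 1 := by
    rw [← Units.val_mul, mul_inv_cancel]; simp [Matrix.one_apply]
  rw [Matrix.mul_apply] at h1
  simp [hz] at h1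

lemma step {n : ℕ} {A : Matrix (Fin n) (Fin n) ℝ} (hA : IsUnit A)
    {v : EuclideanSpace ℝ (Fin n)} {σ : ℝ}
    (hv : (A.transpose * A).mulVec (ofE v) = σ ^ 2 • ofE v)
    (hF : frobSq A ≠ 0) (y : EuclideanSpace ℝ (Fin n)) :
    ∑ i, (‖row A i‖ ^ 2 / frobSq A) * ⟪reflRow A i y, v⟫
      = (1 - 2 * σ ^ 2 / frobSq A) * ⟪y, v⟫ := by
  have hkey : ∑ i, ⟪y, row A i⟫ * ⟪row A i, v⟫ = σ ^ 2 * ⟪y, v⟫ := by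
    have hcol : ∀ j, ∑ l, (∑ i, A i j * A i l) * v l = σ ^ 2 * v j := by
      intro j
      have := congrFun hv j
      simpa [Matrix.mulVec, Matrix.mul_apply, Matrix.transpose_apply, ofE, dotProduct,
        Finset.sum_mul, mul_assoc] using this
    simp only [innerE]
    have : ∀ i : Fin n, (∑ j, y j * row A i j) * (∑ l, row A i l * v l)
        = ∑ j, ∑ l, y j * (A i j * A i l * v l) := by
      intro i
      rw [Finset.sum_mul]
      refine Finset.sum_congr rfl fun j _ => ?_
      rw [Finset.mul_sum]
      refine Finset.sum_congr rfl fun l _ => ?_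
      show y j * A i j * (A i l * v l) = _
      ring
    rw [Finset.sum_congr rfl fun i _ => this i, Finset.sum_comm]
    rw [Finset.mul_sum]
    refine Finset.sum_congr rfl fun j _ => ?_
    rw [Finset.sum_comm]
    have := hcol j
    calc ∑ l, ∑ i, y j * (A i j * A i l * v l)
        = y j * ∑ l, (∑ i, A i j * A i l) * v l := by
          rw [Finset.mul_sum]
          refine Finset.sum_congr rfl fun l _ => ?_
          rw [Finset.sum_mul, Finset.mul_sum]
      _ = σ ^ 2 * (y j * v j) := by rw [this]; ring
  have hFsum : ∑ i, ‖row A i‖ ^ 2 = frobSq A := by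
    simp [norm_row_sq, frobSq]
  have hrefl : ∀ i, ⟪reflRow A i y, v⟫
      = ⟪y, v⟫ - 2 * (⟪y, row A i⟫ / ‖row A i‖ ^ 2) * ⟪row A i, v⟫ := by
    intro i
    simp only [reflRow, inner_sub_left, real_inner_smul_left, innerE, PiLp.sub_apply,
      PiLp.smul_apply, smul_eq_mul]
  calc ∑ i, (‖row A i‖ ^ 2 / frobSq A) * ⟪reflRow A i y, v⟫
      = ∑ i, ((‖row A i‖ ^ 2 / frobSq A) * ⟪y, v⟫
          - (2 / frobSq A) * (⟪y, row A i⟫ * ⟪row A i, v⟫)) := by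
        refine Finset.sum_congr rfl fun i _ => ?_
        rw [hrefl i]
        have hi := row_ne_zero hA i
        field_simp
        have hn : ‖row A i‖ ≠ 0 := fun h => hi (by rw [h]; ring)
        have hinv : ‖row A i‖ ^ 2 * ‖row A i‖⁻¹ ^ 2 = 1 := by
          rw [← mul_pow, mul_inv_cancel₀ hn, one_pow]
        linear_combination (-2 * ⟪y, row A i⟫ * ⟪row A i, v⟫) * hinv
    _ = (1 - 2 * σ ^ 2 / frobSq A) * ⟪y, v⟫ := by
        rw [Finset.sum_sub_distrib, ← Finset.sum_mul, ← Finset.sum_div, hFsum,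
          ← Finset.mul_sum, hkey]
        field_simp

/-- Proposition 1: if `v` is an eigenvector of `AᵀA` with eigenvalue `σ²`, then
`E⟨R^k x, v⟩ = (1 − 2σ²/‖A‖_F²)^k · ⟨x, v⟩`. -/
theorem expected_inner_singular_vector {n : ℕ} (A : Matrix (Fin n) (Fin n) ℝ)
    (hA : IsUnit A) (v : EuclideanSpace ℝ (Fin n)) (hv0 : v ≠ 0) (σ : ℝ)
    (hv : (A.transpose * A).mulVec (ofE v) = σ ^ 2 • ofE v)
    (x : EuclideanSpace ℝ (Fin n)) (k : ℕ) :
    ∑ is : Fin k → Fin n, (∏ j, ‖row A (is j)‖ ^ 2 / frobSq A) * ⟪applySeq A k is x, v⟫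
      = (1 - 2 * σ ^ 2 / frobSq A) ^ k * ⟪x, v⟫ := by
  have hF : frobSq A ≠ 0 := by
    rcases Nat.eq_zero_or_pos n with h | h
    · subst h; exact absurd (Subsingleton.elim v 0) hv0
    · have hpos : 0 < frobSq A := by
        have hsum : frobSq A = ∑ i, ‖row A i‖ ^ 2 := by simp [norm_row_sq, frobSq]
        rw [hsum]
        refine Finset.sum_pos (fun i _ => ?_) (by simp [Finset.univ_nonempty_iff, Fin.pos_iff_nonempty.mp h])
        exact lt_of_le_of_ne (sq_nonneg _) (Ne.symm (row_ne_zero hA i))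
      exact ne_of_gt hpos
  induction k with
  | zero => simp [applySeq]
  | succ k ih =>
    set e := Fin.snocEquiv (fun _ : Fin (k + 1) => Fin n) with he
    rw [← Equiv.sum_comp e (fun is : Fin (k + 1) → Fin n =>
      (∏ j, ‖row A (is j)‖ ^ 2 / frobSq A) * ⟪applySeq A (k + 1) is x, v⟫)]
    rw [Fintype.sum_prod_type]
    have hterm : ∀ (a : Fin n) (f : Fin k → Fin n),
        (∏ j, ‖row A (e (a, f) j)‖ ^ 2 / frobSq A) * ⟪applySeq A (k + 1) (e (a, f)) x, v⟫
        = (∏ j, ‖row A (f j)‖ ^ 2 / frobSq A) *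
            ((‖row A a‖ ^ 2 / frobSq A) * ⟪reflRow A a (applySeq A k f x), v⟫) := by
      intro a f
      have h1 : (fun j : Fin k => e (a, f) j.castSucc) = f := by
        funext j; simp [he, Fin.snocEquiv]
      have h2 : e (a, f) (Fin.last k) = a := by simp [he, Fin.snocEquiv]
      rw [Fin.prod_univ_castSucc]
      have h3 : ∀ j : Fin k, e (a, f) j.castSucc = f j := fun j => congrFun h1 j
      simp only [applySeq, h1, h2, h3]
      ring
    calc ∑ a, ∑ f, (∏ j, ‖row A (e (a, f) j)‖ ^ 2 / frobSq A)
            * ⟪applySeq A (k + 1) (e (a, f)) x, v⟫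
        = ∑ f : Fin k → Fin n, (∏ j, ‖row A (f j)‖ ^ 2 / frobSq A) *
            ∑ a, (‖row A a‖ ^ 2 / frobSq A) * ⟪reflRow A a (applySeq A k f x), v⟫ := by
          rw [Finset.sum_comm]
          exact Finset.sum_congr rfl fun f _ => by
            rw [Finset.mul_sum]; exact Finset.sum_congr rfl fun a _ => hterm a f
      _ = (1 - 2 * σ ^ 2 / frobSq A) * ∑ f : Fin k → Fin n,
            (∏ j, ‖row A (f j)‖ ^ 2 / frobSq A) * ⟪applySeq A k f x, v⟫ := by
          rw [Finset.mul_sum]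
          exact Finset.sum_congr rfl fun f _ => by rw [step hA hv hF]; ring
      _ = (1 - 2 * σ ^ 2 / frobSq A) ^ (k + 1) * ⟪x, v⟫ := by rw [ih]; ring
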